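/- If M is a redundant 4×4 complex matrix and T is any 2×2 complex matrix, then the matrix T^{⊗2} M (Tᵀ)^{⊗2} is also redundant, and det(φ(T^{⊗2} M (Tᵀ)^{⊗2})) = det(φ(M)) · (det T)^6. -/

import Mathlib

/-!
`symProj = B * A` is the projection of `ℂ² ⊗ ℂ²` onto the symmetric tensors (it averages the
two middle coordinates), `A * B = 1`, and a matrix is redundant exactly when `symProj` fixes it
from both sides. Since `T ⊗ T` commutes with the swap of tensor factors, it commutes with
`symProj`; hence conjugating by Kronecker squares preserves redundancy, and `φ` turns `T ⊗ T`
into the symmetric square `sym2 T = A (T ⊗ T) B`, so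
`φ((T ⊗ T) M (S ⊗ S)) = sym2 T · φ(M) · sym2 S`.
The determinant identity follows from `det (sym2 T) = (det T)³`.
-/

open Matrix

noncomputable def A : Matrix (Fin 3) (Fin 4) ℂ :=
  !![1, 0, 0, 0; 0, 1/2, 1/2, 0; 0, 0, 0, 1]

def B : Matrix (Fin 4) (Fin 3) ℂ :=
  !![1, 0, 0; 0, 1, 0; 0, 1, 0; 0, 0, 1]

def Redundant (M : Matrix (Fin 4) (Fin 4) ℂ) : Prop :=
  (∀ j, M 1 j = M 2 j) ∧ (∀ i, M i 1 = M i 2)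

def bits : Fin 4 → Fin 2 × Fin 2 := ![(0, 0), (0, 1), (1, 0), (1, 1)]

/-- The Kronecker square `T ⊗ T` as a 4×4 matrix with rows/columns ordered 00,01,10,11. -/
def kron2 (T : Matrix (Fin 2) (Fin 2) ℂ) : Matrix (Fin 4) (Fin 4) ℂ :=
  Matrix.of fun i j => T (bits i).1 (bits j).1 * T (bits i).2 (bits j).2

noncomputable def symProj : Matrix (Fin 4) (Fin 4) ℂ := B * A

theorem symProj_eq :
    symProj = !![1, 0, 0, 0; 0, 1/2, 1/2, 0; 0, 1/2, 1/2, 0; 0, 0, 0, 1] := by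
  ext i j
  fin_cases i <;> fin_cases j <;> simp [symProj, A, B, mul_apply, Fin.sum_univ_three]

theorem A_mul_B : A * B = 1 := by
  ext i j
  fin_cases i <;> fin_cases j <;> norm_num [A, B, mul_apply, Fin.sum_univ_succ]

theorem rows_eq_iff_symProj_mul (M : Matrix (Fin 4) (Fin 4) ℂ) :
    (∀ j, M 1 j = M 2 j) ↔ symProj * M = M := by
  rw [symProj_eq]
  constructor
  · intro h
    ext i j
    fin_cases i <;> simp [mul_apply, Fin.sum_univ_four, h j] <;> ring
  · intro h j
    have h1 := congrFun (congrFun h 1) j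
    simp only [mul_apply, of_apply, cons_val', cons_val, cons_val_fin_one, Fin.sum_univ_four,
      zero_mul, zero_add, add_zero] at h1
    linear_combination -2 * h1

theorem cols_eq_iff_mul_symProj (M : Matrix (Fin 4) (Fin 4) ℂ) :
    (∀ i, M i 1 = M i 2) ↔ M * symProj = M := by
  rw [symProj_eq]
  constructor
  · intro h
    ext i j
    fin_cases j <;> simp [mul_apply, Fin.sum_univ_four, h i] <;> ring
  · intro h i
    have h1 := congrFun (congrFun h i) 1
    simp only [mul_apply, of_apply, cons_val', cons_val, cons_val_fin_one, Fin.sum_univ_four,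
      mul_zero, zero_add, add_zero] at h1
    linear_combination -2 * h1

theorem redundant_iff (M : Matrix (Fin 4) (Fin 4) ℂ) :
    Redundant M ↔ symProj * M = M ∧ M * symProj = M :=
  and_congr (rows_eq_iff_symProj_mul M) (cols_eq_iff_mul_symProj M)

theorem commute_symProj_kron2 (T : Matrix (Fin 2) (Fin 2) ℂ) : Commute symProj (kron2 T) := by
  rw [symProj_eq, Commute, SemiconjBy]
  ext i j
  fin_cases i <;> fin_cases j <;> simp [kron2, bits, mul_apply, Fin.sum_univ_four] <;> ring

theorem Redundant.kron2_mul_mul_kron2 {M : Matrix (Fin 4) (Fin 4) ℂ} (hM : Redundant M)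
    (T S : Matrix (Fin 2) (Fin 2) ℂ) : Redundant (kron2 T * M * kron2 S) := by
  obtain ⟨hleft, hright⟩ := (redundant_iff M).1 hM
  refine (redundant_iff _).2 ⟨?_, ?_⟩
  · calc symProj * (kron2 T * M * kron2 S) = kron2 T * (symProj * M) * kron2 S := by
          simp only [← Matrix.mul_assoc, (commute_symProj_kron2 T).eq]
      _ = kron2 T * M * kron2 S := by rw [hleft]
  · calc kron2 T * M * kron2 S * symProj = kron2 T * (M * symProj) * kron2 S := by
          simp only [Matrix.mul_assoc, ← (commute_symProj_kron2 S).eq]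
      _ = kron2 T * M * kron2 S := by rw [hright]

def sym2 (T : Matrix (Fin 2) (Fin 2) ℂ) : Matrix (Fin 3) (Fin 3) ℂ :=
  !![T 0 0 ^ 2, 2 * T 0 0 * T 0 1, T 0 1 ^ 2;
    T 0 0 * T 1 0, T 0 0 * T 1 1 + T 0 1 * T 1 0, T 0 1 * T 1 1;
    T 1 0 ^ 2, 2 * T 1 0 * T 1 1, T 1 1 ^ 2]

theorem A_mul_kron2_mul_B (T : Matrix (Fin 2) (Fin 2) ℂ) : A * kron2 T * B = sym2 T := by
  ext i j
  fin_cases i <;> fin_cases j <;>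
    simp only [mul_apply, Fin.sum_univ_succ, Fin.sum_univ_zero] <;>
    simp [A, B, kron2, bits, sym2] <;> ring

theorem det_sym2 (T : Matrix (Fin 2) (Fin 2) ℂ) : (sym2 T).det = T.det ^ 3 := by
  simp only [sym2, det_fin_three, det_fin_two, of_apply, cons_val', cons_val, cons_val_fin_one]
  ring

theorem A_mul_kron2 (T : Matrix (Fin 2) (Fin 2) ℂ) : A * kron2 T = sym2 T * A :=
  calc A * kron2 T = A * symProj * kron2 T := by
        rw [symProj, ← Matrix.mul_assoc, A_mul_B, Matrix.one_mul]
    _ = A * kron2 T * B * A := by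
        rw [Matrix.mul_assoc, (commute_symProj_kron2 T).eq, symProj]
        simp only [Matrix.mul_assoc]
    _ = sym2 T * A := by rw [A_mul_kron2_mul_B]

theorem kron2_mul_B (T : Matrix (Fin 2) (Fin 2) ℂ) : kron2 T * B = B * sym2 T :=
  calc kron2 T * B = kron2 T * symProj * B := by
        rw [symProj, Matrix.mul_assoc, Matrix.mul_assoc B, A_mul_B, Matrix.mul_one]
    _ = B * (A * kron2 T * B) := by
        rw [← (commute_symProj_kron2 T).eq, symProj]
        simp only [Matrix.mul_assoc]
    _ = B * sym2 T := by rw [A_mul_kron2_mul_B]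

theorem A_mul_kron2_mul_mul_kron2_mul_B (M : Matrix (Fin 4) (Fin 4) ℂ)
    (T S : Matrix (Fin 2) (Fin 2) ℂ) :
    A * (kron2 T * M * kron2 S) * B = sym2 T * (A * M * B) * sym2 S := by
  simp only [Matrix.mul_assoc, kron2_mul_B]
  simp only [← Matrix.mul_assoc, A_mul_kron2]

theorem redundant_invariant (M : Matrix (Fin 4) (Fin 4) ℂ) (hM : Redundant M)
    (T : Matrix (Fin 2) (Fin 2) ℂ) :
    Redundant (kron2 T * M * kron2 Tᵀ) ∧
      (A * (kron2 T * M * kron2 Tᵀ) * B).det = (A * M * B).det * T.det ^ 6 := by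
  refine ⟨hM.kron2_mul_mul_kron2 T Tᵀ, ?_⟩
  rw [A_mul_kron2_mul_mul_kron2_mul_B, det_mul, det_mul, det_sym2, det_sym2, det_transpose]
  ring
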